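/- arXiv:2507.17302 — 7 statements merged into one kernel-verified Lean document; each statement's English description precedes it below -/
import Mathlib

section
/- For any bipartite graph G = (A ∪ B, E), the vertex set A ∪ B admits a partition X ∪ Y such that Y is an independent set in G and the bipartite subgraph G[X,Y] (consisting of all edges of G with one endpoint in X and one in Y) contains a matching saturating X (i.e., a matching covering every vertex of X). -/
/-!
Let `Y` be an independent set of maximum size and `X` its complement. If `T` is independent and
disjoint from `Y`, trading the neighbours of `T` in `Y` for `T` itself gives another independent
set, so by maximality `T` has at least `|T|` neighbours in `Y`. A 2-colouring splits any `S ⊆ X`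
into two independent sets whose neighbourhoods lie in opposite colour classes, hence are disjoint;
adding the two bounds gives Hall's condition for matching `X` into `Y`.
-/

open Set

namespace SimpleGraph

variable {V : Type*} {G : SimpleGraph V}

lemma IsMaximumIndepSet.ncard_le [Finite V] {Y : Finset V} (hY : G.IsMaximumIndepSet Y)
    {T : Set V} (hT : G.IsIndepSet T) : T.ncard ≤ Y.card := by
  rw [ncard_eq_toFinset_card T]
  exact hY.maximum _ (by simpa using hT)

lemma IsMaximumIndepSet.ncard_le_ncard_neighbors [Finite V] {Y : Finset V}
    (hY : G.IsMaximumIndepSet Y) {T : Set V} (hT : G.IsIndepSet T) (hTY : Disjoint T Y) :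
    T.ncard ≤ ((⋃ v ∈ T, G.neighborSet v) ∩ Y).ncard := by
  set N := (⋃ v ∈ T, G.neighborSet v) ∩ Y
  have hNY : N ⊆ Y := inter_subset_right
  have hswap : G.IsIndepSet ((↑Y \ N) ∪ T) := by
    refine pairwise_union.mpr ⟨hY.isIndepSet.mono sdiff_subset, hT, ?_⟩
    rintro y ⟨hy, hyN⟩ t ht -
    exact ⟨fun h => hyN ⟨mem_biUnion ht h.symm, hy⟩, fun h => hyN ⟨mem_biUnion ht h, hy⟩⟩
  have hcard : ((↑Y \ N) ∪ T).ncard = Y.card - N.ncard + T.ncard := by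
    rw [ncard_union_eq (hTY.symm.mono_left sdiff_subset), ncard_sdiff hNY,
      ncard_coe_finset]
  have hN : N.ncard ≤ Y.card := by simpa using ncard_le_ncard hNY
  have := hY.ncard_le hswap
  omega

lemma IsMaximumIndepSet.ncard_le_ncard_neighbors_of_colorable [Finite V] (hG : G.Colorable 2)
    {Y : Finset V} (hY : G.IsMaximumIndepSet Y) {S : Set V} (hSY : Disjoint S Y) :
    S.ncard ≤ ((⋃ v ∈ S, G.neighborSet v) ∩ Y).ncard := by
  obtain ⟨c⟩ := hG
  set S₀ := S ∩ c ⁻¹' {0}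
  set S₁ := S \ c ⁻¹' {0}
  have hS₀ : G.IsIndepSet S₀ := fun v hv w hw _ hadj => c.valid hadj (hv.2.trans hw.2.symm)
  have hS₁ : G.IsIndepSet S₁ := fun v hv w hw _ hadj => by
    have hv' : c v ≠ 0 := hv.2
    have hw' : c w ≠ 0 := hw.2
    exact c.valid hadj (by omega)
  have hdisj : Disjoint ((⋃ v ∈ S₀, G.neighborSet v) ∩ Y) ((⋃ v ∈ S₁, G.neighborSet v) ∩ Y) := by
    refine Set.disjoint_left.mpr fun y hy₀ hy₁ => ?_
    obtain ⟨a, ⟨-, ha : c a = 0⟩, hay⟩ := mem_iUnion₂.mp hy₀.1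
    obtain ⟨b, ⟨-, hb : c b ≠ 0⟩, hby⟩ := mem_iUnion₂.mp hy₁.1
    have := c.valid hay
    have := c.valid hby
    omega
  have hsub : ∀ T ⊆ S, (⋃ v ∈ T, G.neighborSet v) ∩ Y ⊆ (⋃ v ∈ S, G.neighborSet v) ∩ Y :=
    fun T hT => inter_subset_inter_left _ (biUnion_subset_biUnion_left hT)
  calc S.ncard = S₀.ncard + S₁.ncard := (ncard_inter_add_ncard_sdiff_eq_ncard S _).symm
    _ ≤ ((⋃ v ∈ S₀, G.neighborSet v) ∩ Y).ncard + ((⋃ v ∈ S₁, G.neighborSet v) ∩ Y).ncard :=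
      add_le_add (hY.ncard_le_ncard_neighbors hS₀ (hSY.mono_left inter_subset_left))
        (hY.ncard_le_ncard_neighbors hS₁ (hSY.mono_left sdiff_subset))
    _ = ((⋃ v ∈ S₀, G.neighborSet v) ∩ Y ∪ (⋃ v ∈ S₁, G.neighborSet v) ∩ Y).ncard :=
      (ncard_union_eq hdisj).symm
    _ ≤ ((⋃ v ∈ S, G.neighborSet v) ∩ Y).ncard :=
      ncard_le_ncard (union_subset (hsub _ inter_subset_left) (hsub _ sdiff_subset))

lemma neighborSet_between_compl {s : Set V} {v : V} (hv : v ∈ s) :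
    (G.between s sᶜ).neighborSet v = G.neighborSet v ∩ sᶜ := by
  ext w
  simp [between_adj, hv]

lemma biUnion_neighborSet_between_compl {s t : Set V} (hts : t ⊆ s) :
    ⋃ v ∈ t, (G.between s sᶜ).neighborSet v = (⋃ v ∈ t, G.neighborSet v) ∩ sᶜ := by
  rw [iUnion₂_inter]
  exact iUnion₂_congr fun v hv => G.neighborSet_between_compl (hts hv)

end SimpleGraph

/-- For any (finite) bipartite graph `G`, the vertex set admits a partition `X ∪ Y`
(here `Y = Xᶜ`) such that `Y` is an independent set in `G` and the bipartite subgraph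
`G[X,Y]` (all edges of `G` with one endpoint in `X` and one in `Y`) contains a
matching saturating `X`. -/
theorem bipartite_partition_with_saturating_matching
    {V : Type*} [Fintype V] (G : SimpleGraph V)
    (hbip : G.Colorable 2) :
    ∃ X : Set V,
      (∀ v ∈ Xᶜ, ∀ w ∈ Xᶜ, ¬ G.Adj v w) ∧
      ∃ M : G.Subgraph, M.IsMatching ∧ X ⊆ M.verts ∧
        ∀ ⦃v w : V⦄, M.Adj v w → (v ∈ X ↔ w ∈ Xᶜ) := by
  classical
  obtain ⟨Y, hY⟩ := G.maximumIndepSet_exists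
  set X : Set V := (↑Y)ᶜ
  have hall : ∀ s ⊆ X, s.ncard ≤ (⋃ x ∈ s, (G.between X Xᶜ).neighborSet x).ncard := by
    intro s hs
    rw [G.biUnion_neighborSet_between_compl hs, compl_compl]
    exact hY.ncard_le_ncard_neighbors_of_colorable hbip (subset_compl_iff_disjoint_right.mp hs)
  obtain ⟨M, hXM, hM⟩ :=
    SimpleGraph.exists_isMatching_of_forall_ncard_le
      (G.between_isBipartiteWith disjoint_compl_right) hall
  refine ⟨X, fun v hv w hw hadj => ?_, M.map (SimpleGraph.Hom.ofLE G.between_le),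
    hM.map_ofLE G.between_le, by simpa using hXM, fun v w hvw => ?_⟩
  · rw [compl_compl] at hv hw
    exact hY.isIndepSet hv hw hadj.ne hadj
  · rw [SimpleGraph.Subgraph.map_adj] at hvw
    obtain ⟨v, w, hvw, rfl, rfl⟩ := hvw
    have := (M.adj_sub hvw).2
    tauto
end

section
/- Let G = (X ∪ Y, E) be a connected bipartite graph with at least one vertex of odd degree in X and at least one vertex of odd degree in Y, and let V_odd be the set of odd-degree vertices of G. Then E admits a decomposition into exactly |V_odd|/2 open trails that contains at least one XY-trail, i.e., at least one open trail with one endpoint in X and the other endpoint in Y. -/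
/-!
Join a new vertex to every odd-degree vertex of `G`. The resulting graph is connected and all of
its degrees are even, so it has an Euler circuit; cutting that circuit at the new vertex gives
`|V_odd| / 2` open trails that use every edge of `G` exactly once. If none of them joins `X` to its
complement, connectivity makes a trail with both ends in `X` meet a trail with both ends outside
`X`, and exchanging their tails at a common vertex yields two trails that do.
-/

namespace SimpleGraph

open Finset

variable {V : Type*} {G : SimpleGraph V}

namespace Walk

variable [DecidableEq V]

theorem IsEulerian.rotate {u v : V} {c : G.Walk v v} (hc : c.IsEulerian) (hu : u ∈ c.support) :
    (c.rotate u hu).IsEulerian :=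
  ((isTrail_rotate hu).mpr hc.isTrail).isEulerian_of_forall_mem fun _ he =>
    (c.rotate_edges u hu).perm.mem_iff.mpr (hc.mem_edges_iff.mpr he)

theorem coe_edges_eq_takeUntil_add_dropUntil {u v w : V} (p : G.Walk u v) (h : w ∈ p.support) :
    (p.edges : Multiset (Sym2 V)) = (p.takeUntil w h).edges + (p.dropUntil w h).edges := by
  rw [Multiset.coe_add, ← edges_append, take_spec]

theorem IsTrail.countP_edges_eq_card_filter {u v : V} {p : G.Walk u v} (hp : p.IsTrail)
    (x : V) : p.edges.countP (x ∈ ·) = #(hp.edgesFinset.filter (x ∈ ·)) := by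
  rw [← Multiset.coe_countP, Multiset.countP_eq_card_filter]
  rfl

variable [Fintype V] [DecidableRel G.Adj]

theorem IsTrail.exists_adj_notMem_edges {u v x : V} {p : G.Walk u v} (hp : p.IsTrail)
    (hx : Even (G.degree x)) (hodd : ¬ Even (p.edges.countP (x ∈ ·))) :
    ∃ y, G.Adj x y ∧ s(x, y) ∉ p.edges := by
  by_contra! hall
  refine hodd ?_
  have hinc : hp.edgesFinset.filter (x ∈ ·) = G.incidenceFinset x := by
    ext e
    simp only [mem_filter, incidenceFinset_eq_filter, mem_edgeFinset]
    refine ⟨fun h => ⟨p.edges_subset_edgeSet h.1, h.2⟩, fun ⟨he, hxe⟩ => ⟨?_, hxe⟩⟩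
    obtain ⟨y, rfl⟩ := Sym2.mem_iff_exists.mp hxe
    exact hall y he
  rwa [hp.countP_edges_eq_card_filter, hinc, card_incidenceFinset_eq_degree]

theorem IsEulerian.coe_edges {u v : V} {p : G.Walk u v} (hp : p.IsEulerian) :
    (p.edges : Multiset (Sym2 V)) = G.edgeFinset.val :=
  congrArg Finset.val hp.edgesFinset_eq

theorem IsEulerian.countP_edges_eq_degree {u v : V} {p : G.Walk u v} (hp : p.IsEulerian)
    (x : V) : p.edges.countP (x ∈ ·) = G.degree x := by
  rw [hp.isTrail.countP_edges_eq_card_filter, hp.edgesFinset_eq, ← incidenceFinset_eq_filter,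
    card_incidenceFinset_eq_degree]

end Walk

open Walk

theorem Connected.exists_mem_support_of_forall_mem_edges {ι : Type*} (hG : G.Connected)
    (T : ι → (u : V) × (v : V) × G.Walk u v) (hT : ∀ e ∈ G.edgeSet, ∃ i, e ∈ (T i).2.2.edges)
    (P : ι → Prop) {i j : ι} (hi : P i) (hj : ¬ P j) :
    ∃ k l v, P k ∧ ¬ P l ∧ v ∈ (T k).2.2.support ∧ v ∈ (T l).2.2.support := by
  by_contra! hdisj
  let S : Set V := {v | ∃ k, P k ∧ v ∈ (T k).2.2.support}
  have hjS : (T j).1 ∉ S := fun ⟨k, hk, hjk⟩ => hdisj k j _ hk hj hjk (T j).2.2.start_mem_support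
  obtain ⟨d, -, ⟨k, hk, hdk⟩, hdS⟩ := (hG.preconnected (T i).1 (T j).1).some.exists_boundary_dart S
    ⟨i, hi, (T i).2.2.start_mem_support⟩ hjS
  obtain ⟨l, hl⟩ := hT d.edge d.edge_mem
  by_cases hPl : P l
  · exact hdS ⟨l, hPl, (T l).2.2.snd_mem_support_of_mem_edges hl⟩
  · exact hdisj k l _ hk hPl hdk ((T l).2.2.fst_mem_support_of_mem_edges hl)

section Finite

variable [Fintype V] [DecidableRel G.Adj]

/-- Euler's theorem, via a longest trail: it is closed because an open trail can be extended at
its start, and it uses every edge because a closed trail missing an edge at one of its vertices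
can be rotated there and extended. -/
theorem Connected.exists_isEulerian [DecidableEq V] (hG : G.Connected)
    (heven : ∀ v, Even (G.degree v)) :
    ∃ (u : V) (p : G.Walk u u), p.IsEulerian := by
  have := hG.nonempty
  obtain ⟨u, v, p, hp, hmax⟩ := Walk.exists_isTrail_forall_isTrail_length_le_length G
  obtain rfl : u = v := by
    by_contra huv
    obtain ⟨w, huw, hw⟩ := hp.exists_adj_notMem_edges (heven u)
      (by simp [hp.even_countP_edges_iff, huv])
    have := hmax _ _ (cons huw.symm p) (by simpa [isTrail_cons, hp, Sym2.eq_swap] using hw)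
    simp at this
  refine ⟨u, p, hp.isEulerian_of_forall_mem fun e he => ?_⟩
  by_contra hep
  obtain ⟨w, hw, x, hwx, hwxp⟩ : ∃ w ∈ p.support, ∃ x, G.Adj w x ∧ s(w, x) ∉ p.edges := by
    induction e using Sym2.ind with
    | _ a b =>
    by_cases ha : a ∈ p.support
    · exact ⟨a, ha, b, he, hep⟩
    obtain ⟨d, -, hd, hd'⟩ := (hG.preconnected u a).some.exists_boundary_dart {x | x ∈ p.support}
      p.start_mem_support ha
    exact ⟨d.fst, hd, d.snd, d.adj, fun h => hd' (p.snd_mem_support_of_mem_edges h)⟩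
  have := hmax _ _ (cons hwx.symm (p.rotate w hw))
    (by simpa [isTrail_cons, hp, Sym2.eq_swap, (p.rotate_edges w hw).perm.mem_iff] using hwxp)
  simp at this

section Decomposition

variable {ι : Type*} [Fintype ι]

def IsTrailDecomposition (T : ι → (u : V) × (v : V) × G.Walk u v) : Prop :=
  ∑ i, ((T i).2.2.edges : Multiset (Sym2 V)) = G.edgeFinset.val

variable {T : ι → (u : V) × (v : V) × G.Walk u v}

theorem IsTrailDecomposition.isTrail (hT : IsTrailDecomposition T) (i : ι) :
    (T i).2.2.IsTrail := by
  have hle : ((T i).2.2.edges : Multiset (Sym2 V)) ≤ G.edgeFinset.val :=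
    hT ▸ single_le_sum (fun _ _ => Multiset.zero_le _) (mem_univ i)
  exact ⟨Multiset.coe_nodup.mp (Multiset.nodup_of_le hle G.edgeFinset.nodup)⟩

theorem IsTrailDecomposition.existsUnique_mem_edges (hT : IsTrailDecomposition T) {e : Sym2 V}
    (he : e ∈ G.edgeSet) : ∃! i, e ∈ (T i).2.2.edges := by
  have hmem : e ∈ ∑ i, ((T i).2.2.edges : Multiset (Sym2 V)) :=
    hT ▸ Finset.mem_def.mp (mem_edgeFinset.mpr he)
  obtain ⟨i, -, hi⟩ := Multiset.mem_sum.mp hmem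
  refine ⟨i, hi, fun j hj => by_contra fun hji => ?_⟩
  have hle : ((T j).2.2.edges : Multiset (Sym2 V)) + (T i).2.2.edges ≤ G.edgeFinset.val :=
    hT ▸ add_le_sum (fun _ _ => Multiset.zero_le _) (mem_univ j) (mem_univ i) hji
  exact Multiset.disjoint_left.mp
    (Multiset.disjoint_of_nodup_add (Multiset.nodup_of_le hle G.edgeFinset.nodup)) hj hi

theorem IsTrailDecomposition.comp_equiv {κ : Type*} [Fintype κ] (hT : IsTrailDecomposition T)
    (σ : κ ≃ ι) : IsTrailDecomposition (T ∘ σ) :=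
  (σ.sum_comp fun i => ((T i).2.2.edges : Multiset (Sym2 V))).trans hT

/-- Splitting the walks `T i` and `T j` at a common vertex and exchanging their tails. -/
theorem IsTrailDecomposition.exchange [DecidableEq ι] (hT : IsTrailDecomposition T) {i j : ι}
    (hij : i ≠ j) {v : V} (hvi : v ∈ (T i).2.2.support) (hvj : v ∈ (T j).2.2.support) :
    ∃ T' : ι → (u : V) × (v : V) × G.Walk u v, IsTrailDecomposition T' ∧
      ∀ k, (T' k).1 = (T k).1 ∧ (T' k).2.1 = (T (Equiv.swap i j k)).2.1 := by
  classical
  set p := (T i).2.2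
  set q := (T j).2.2
  let T' := Function.update (Function.update T i
    ⟨_, _, (p.takeUntil v hvi).append (q.dropUntil v hvj)⟩) j
    ⟨_, _, (q.takeUntil v hvj).append (p.dropUntil v hvi)⟩
  have hT'i : T' i = ⟨_, _, (p.takeUntil v hvi).append (q.dropUntil v hvj)⟩ := by
    simp [T', hij]
  have hT'j : T' j = ⟨_, _, (q.takeUntil v hvj).append (p.dropUntil v hvi)⟩ := by simp [T']
  have hT'k : ∀ k, k ≠ i → k ≠ j → T' k = T k := fun k hki hkj => by simp [T', hki, hkj]
  refine ⟨T', ?_, fun k => ?_⟩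
  · have hsum : ∀ F : ι → Multiset (Sym2 V), ∑ k, F k = F i + F j + ∑ k ∈ {i, j}ᶜ, F k :=
      fun F => by rw [← sum_add_sum_compl {i, j}, sum_pair hij]
    rw [IsTrailDecomposition, ← hT, hsum, hsum fun k => ((T k).2.2.edges : Multiset (Sym2 V)),
      hT'i, hT'j, p.coe_edges_eq_takeUntil_add_dropUntil hvi,
      q.coe_edges_eq_takeUntil_add_dropUntil hvj]
    congr 1
    · simp only [edges_append, ← Multiset.coe_add]
      abel
    · refine sum_congr rfl fun k hk => ?_
      simp only [mem_compl, mem_insert, mem_singleton, not_or] at hk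
      rw [hT'k k hk.1 hk.2]
  · rcases eq_or_ne k i with rfl | hki
    · rw [hT'i, Equiv.swap_apply_left]
      exact ⟨rfl, rfl⟩
    rcases eq_or_ne k j with rfl | hkj
    · rw [hT'j, Equiv.swap_apply_right]
      exact ⟨rfl, rfl⟩
    rw [hT'k k hki hkj, Equiv.swap_apply_of_ne_of_ne hki hkj]
    exact ⟨rfl, rfl⟩

theorem IsTrailDecomposition.exists_crossing (hG : G.Connected)
    (hT : IsTrailDecomposition T) (hopen : ∀ i, (T i).1 ≠ (T i).2.1) (X : Set V)
    (hX : ∃ i, (T i).1 ∈ X ∨ (T i).2.1 ∈ X) (hY : ∃ j, (T j).1 ∉ X ∨ (T j).2.1 ∉ X) :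
    ∃ T' : ι → (u : V) × (v : V) × G.Walk u v, IsTrailDecomposition T' ∧
      (∀ i, (T' i).1 ≠ (T' i).2.1) ∧
      ∃ i, ((T' i).1 ∈ X ∧ (T' i).2.1 ∉ X) ∨ ((T' i).1 ∉ X ∧ (T' i).2.1 ∈ X) := by
  classical
  by_cases hcross : ∃ i, ((T i).1 ∈ X ∧ (T i).2.1 ∉ X) ∨ ((T i).1 ∉ X ∧ (T i).2.1 ∈ X)
  · exact ⟨T, hT, hopen, hcross⟩
  have hside : ∀ i, ((T i).2.1 ∈ X ↔ (T i).1 ∈ X) := fun i => by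
    have := not_exists.mp hcross i
    tauto
  obtain ⟨i, hi⟩ : ∃ i, (T i).1 ∈ X := hX.imp fun i h => h.elim id (hside i).mp
  obtain ⟨j, hj⟩ : ∃ j, (T j).1 ∉ X := hY.imp fun j h => h.elim id (mt (hside j).mpr)
  obtain ⟨k, l, v, hk, hl, hvk, hvl⟩ := hG.exists_mem_support_of_forall_mem_edges T
    (fun e he => (hT.existsUnique_mem_edges he).exists) (fun i => (T i).1 ∈ X) hi hj
  have hkl : k ≠ l := fun h => hl (h ▸ hk)
  obtain ⟨T', hT', hends⟩ := hT.exchange hkl hvk hvl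
  refine ⟨T', hT', fun m => ?_, k, Or.inl ?_⟩
  · rw [(hends m).2, (hends m).1]
    rcases eq_or_ne m k with rfl | hmk
    · rw [Equiv.swap_apply_left]
      exact fun h => hl ((hside l).mp (h ▸ hk))
    rcases eq_or_ne m l with rfl | hml
    · rw [Equiv.swap_apply_right]
      exact fun h => hl (h ▸ (hside k).mpr hk)
    · rw [Equiv.swap_apply_of_ne_of_ne hmk hml]
      exact hopen m
  · rw [(hends k).2, (hends k).1, Equiv.swap_apply_left]
    exact ⟨hk, mt (hside l).mp hl⟩

end Decomposition

end Finite

section Apex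

variable (G) (S : Finset V)

def withApex : SimpleGraph (Option V) where
  Adj
    | some a, some b => G.Adj a b
    | some a, none => a ∈ S
    | none, some b => b ∈ S
    | none, none => False
  symm := ⟨by rintro (_ | a) (_ | b) h <;> first | exact h | exact h.symm⟩
  loopless := ⟨by rintro (_ | a) h <;> first | exact h | exact G.loopless.irrefl a h⟩

variable {G S}

@[simp] theorem withApex_adj_some_some {a b : V} :
    (G.withApex S).Adj (some a) (some b) ↔ G.Adj a b :=
  Iff.rfl

@[simp] theorem withApex_adj_some_none {a : V} : (G.withApex S).Adj (some a) none ↔ a ∈ S :=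
  Iff.rfl

@[simp] theorem withApex_adj_none_some {b : V} : (G.withApex S).Adj none (some b) ↔ b ∈ S :=
  Iff.rfl

@[simp] theorem withApex_adj_none_none : ¬ (G.withApex S).Adj none none :=
  id

instance [DecidableEq V] [DecidableRel G.Adj] : DecidableRel (G.withApex S).Adj
  | some a, some b => decidable_of_iff (G.Adj a b) Iff.rfl
  | some a, none => decidable_of_iff (a ∈ S) Iff.rfl
  | none, some b => decidable_of_iff (b ∈ S) Iff.rfl
  | none, none => isFalse id

theorem sym2Map_some_mem_edgeSet_withApex {e : Sym2 V} :
    e.map some ∈ (G.withApex S).edgeSet ↔ e ∈ G.edgeSet := by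
  induction e using Sym2.ind
  rfl

section Degree

variable [Fintype V] [DecidableEq V] [DecidableRel G.Adj]

theorem degree_withApex_none : (G.withApex S).degree none = #S := by
  rw [← card_neighborFinset_eq_degree, neighborFinset_eq_filter, card_filter, Fintype.sum_option]
  simp

theorem degree_withApex_some (a : V) :
    (G.withApex S).degree (some a) = G.degree a + if a ∈ S then 1 else 0 := by
  rw [← card_neighborFinset_eq_degree, neighborFinset_eq_filter, card_filter, Fintype.sum_option,
    ← card_neighborFinset_eq_degree, neighborFinset_eq_filter, card_filter]
  simp [add_comm]

theorem even_degree_withApex_odd (v : Option V) :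
    Even ((G.withApex {v | Odd (G.degree v)}).degree v) := by
  cases v with
  | none => simpa [degree_withApex_none] using G.even_card_odd_degree_vertices
  | some a =>
    rw [degree_withApex_some]
    split_ifs with ha
    · exact (mem_filter.mp ha).2.add_one
    · simpa using ha

end Degree

theorem Connected.withApex (hG : G.Connected) (hS : S.Nonempty) : (G.withApex S).Connected := by
  obtain ⟨s, hs⟩ := hS
  have hsome : ∀ a b, (G.withApex S).Reachable (some a) (some b) := fun a b =>
    (hG a b).map ⟨some, fun h => h⟩
  have hnone : ∀ a, (G.withApex S).Reachable (some a) none := fun a =>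
    (hsome a s).trans (Adj.reachable (by simpa using hs))
  refine connected_iff_exists_forall_reachable _ |>.mpr ⟨none, ?_⟩
  rintro (_ | a)
  · rfl
  · exact (hnone a).symm

theorem none_notMem_sym2Map_some (e : Sym2 V) : none ∉ e.map some := by
  simp [Sym2.mem_map]

def apexLoopEdges (t : (u : V) × (v : V) × G.Walk u v) : List (Sym2 (Option V)) :=
  s(none, some t.1) :: (t.2.2.edges.map (Sym2.map some) ++ [s(some t.2.1, none)])

theorem exists_edges_eq_of_walk_some_none : ∀ {x : V} (w : (G.withApex S).Walk (some x) none),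
    ∃ (y : V) (seg : G.Walk x y) (rest : (G.withApex S).Walk none none),
      w.edges = seg.edges.map (Sym2.map some) ++ s(some y, none) :: rest.edges ∧
        rest.length < w.length
  | _, .cons (v := some _) h q => by
    obtain ⟨y, seg, rest, hq, hlen⟩ := exists_edges_eq_of_walk_some_none q
    exact ⟨y, .cons (withApex_adj_some_some.mp h) seg, rest, by simp [hq], by simp; omega⟩
  | x, .cons (v := none) _ q => ⟨x, .nil, q, by simp, by simp⟩

theorem exists_edges_eq_flatten_apexLoopEdges (w : (G.withApex S).Walk none none) :
    ∃ L : List ((u : V) × (v : V) × G.Walk u v), w.edges = (L.map apexLoopEdges).flatten :=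
  match w with
  | .nil => ⟨[], rfl⟩
  | .cons (v := none) h _ => absurd h withApex_adj_none_none
  | .cons (v := some x) h q => by
    obtain ⟨y, seg, rest, hq, hlen⟩ := exists_edges_eq_of_walk_some_none q
    obtain ⟨L, hL⟩ := exists_edges_eq_flatten_apexLoopEdges rest
    exact ⟨⟨x, y, seg⟩ :: L, by simp [hq, hL, apexLoopEdges]⟩
termination_by w.length
decreasing_by simp; omega

section EulerianSplit

variable [DecidableEq V] {W : (G.withApex S).Walk none none} (hW : W.IsEulerian)
  {L : List ((u : V) × (v : V) × G.Walk u v)} (hL : W.edges = (L.map apexLoopEdges).flatten)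
include hW hL

theorem fst_ne_snd_of_edges_eq_flatten {t} (ht : t ∈ L) : t.1 ≠ t.2.1 := by
  have hnodup := (List.nodup_flatten.mp (hL ▸ hW.isTrail.edges_nodup)).1 _ (List.mem_map_of_mem ht)
  rintro heq
  rw [apexLoopEdges, List.nodup_cons] at hnodup
  exact hnodup.1 (by simp [heq, Sym2.eq_swap])

theorem exists_endpoint_of_edges_eq_flatten {v : V} (hv : v ∈ S) :
    ∃ t ∈ L, t.1 = v ∨ t.2.1 = v := by
  have hmem : s(none, some v) ∈ W.edges := hW.mem_edges_iff.mpr (by simpa using hv)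
  rw [hL, List.mem_flatten] at hmem
  obtain ⟨_, hloop, hvt⟩ := hmem
  obtain ⟨t, ht, rfl⟩ := List.mem_map.mp hloop
  refine ⟨t, ht, ?_⟩
  simp [apexLoopEdges] at hvt
  rcases hvt with h | ⟨e, -, he⟩ | h
  · exact Or.inl h.symm
  · exact absurd (he ▸ Sym2.mem_mk_left _ _) (none_notMem_sym2Map_some e)
  · exact Or.inr h.symm

variable [Fintype V] [DecidableRel G.Adj]

theorem isTrailDecomposition_of_edges_eq_flatten :
    IsTrailDecomposition fun i : Fin L.length => L[i] := by
  refine Multiset.ext.mpr fun e => ?_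
  have hcount : ∀ t : (u : V) × (v : V) × G.Walk u v,
      (apexLoopEdges t).count (e.map some) = t.2.2.edges.count e := fun t => by
    have h₁ : s(none, some t.1) ≠ e.map some := fun h => none_notMem_sym2Map_some e (h ▸ by simp)
    have h₂ : s(some t.2.1, none) ≠ e.map some := fun h => none_notMem_sym2Map_some e (h ▸ by simp)
    rw [apexLoopEdges, List.count_cons, List.count_append, List.count_map_of_injective _ _
      (Sym2.map.injective (Option.some_injective V))]
    simp [h₁, h₂]
  have hW' := congrArg (Multiset.count (e.map some)) hW.coe_edges
  simp only [Multiset.coe_count, hL, List.count_flatten, List.map_map,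
    Multiset.count_eq_of_nodup (G.withApex S).edgeFinset.nodup, Finset.mem_val, mem_edgeFinset,
    sym2Map_some_mem_edgeSet_withApex] at hW'
  simp only [Multiset.count_sum', Multiset.coe_count, Multiset.count_eq_of_nodup G.edgeFinset.nodup,
    Finset.mem_val, mem_edgeFinset, ← hW']
  simp [Function.comp_def, hcount]
  exact Fin.sum_univ_fun_getElem L fun t => t.2.2.edges.count e

theorem two_mul_length_of_edges_eq_flatten : 2 * L.length = #S := by
  have h := hW.countP_edges_eq_degree none
  rw [degree_withApex_none, hL, List.countP_flatten, List.map_map] at h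
  rw [← h]
  simp [apexLoopEdges, Function.comp_def, mul_comm]

end EulerianSplit

end Apex

theorem Connected.exists_openTrailDecomposition [Fintype V] [DecidableEq V] [DecidableRel G.Adj]
    (hG : G.Connected) {x : V} (hx : Odd (G.degree x)) :
    ∃ T : Fin (#{v | Odd (G.degree v)} / 2) → (u : V) × (v : V) × G.Walk u v,
      IsTrailDecomposition T ∧ (∀ i, (T i).1 ≠ (T i).2.1) ∧
        ∀ v, Odd (G.degree v) → ∃ i, (T i).1 = v ∨ (T i).2.1 = v := by
  set S : Finset V := {v | Odd (G.degree v)}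
  have hxS : x ∈ S := mem_filter.mpr ⟨mem_univ x, hx⟩
  obtain ⟨u, W, hW⟩ := (hG.withApex ⟨x, hxS⟩).exists_isEulerian even_degree_withApex_odd
  have hxW : s(none, some x) ∈ W.edges := hW.mem_edges_iff.mpr (by simpa using hxS)
  have hnone : none ∈ W.support := W.fst_mem_support_of_mem_edges hxW
  have hW' := hW.rotate hnone
  obtain ⟨L, hL⟩ := exists_edges_eq_flatten_apexLoopEdges (W.rotate none hnone)
  have hlen : L.length = #S / 2 := by
    have := two_mul_length_of_edges_eq_flatten hW' hL
    omega
  refine ⟨fun i => L[i.cast hlen.symm],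
    (isTrailDecomposition_of_edges_eq_flatten hW' hL).comp_equiv (finCongr hlen.symm),
    fun i => fst_ne_snd_of_edges_eq_flatten hW' hL (List.getElem_mem _), fun v hv => ?_⟩
  obtain ⟨t, ht, hvt⟩ := exists_endpoint_of_edges_eq_flatten hW' hL (mem_filter.mpr ⟨mem_univ v, hv⟩)
  obtain ⟨i, hi, rfl⟩ := List.mem_iff_getElem.mp ht
  exact ⟨⟨i, hlen ▸ hi⟩, hvt⟩

end SimpleGraph

theorem connected_bipartite_decomposes_with_XY_trail_general
    {V : Type*} [Fintype V] (G : SimpleGraph V) [DecidableRel G.Adj]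
    (X : Set V)
    (hconn : G.Connected)
    (hoX : ∃ v ∈ X, Odd (G.degree v))
    (hoY : ∃ v, v ∉ X ∧ Odd (G.degree v)) :
    ∃ trails : Fin ((Finset.univ.filter fun v : V => Odd (G.degree v)).card / 2) →
        (u : V) × (v : V) × G.Walk u v,
      (∀ i, (trails i).2.2.IsTrail ∧ (trails i).1 ≠ (trails i).2.1) ∧
      (∀ e ∈ G.edgeSet, ∃! i, e ∈ (trails i).2.2.edges) ∧
      (∃ i, ((trails i).1 ∈ X ∧ (trails i).2.1 ∉ X) ∨
            ((trails i).1 ∉ X ∧ (trails i).2.1 ∈ X)) := by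
  classical
  obtain ⟨x, hxX, hx⟩ := hoX
  obtain ⟨y, hyX, hy⟩ := hoY
  obtain ⟨T, hT, hopen, hends⟩ := hconn.exists_openTrailDecomposition hx
  obtain ⟨i, hi⟩ := hends x hx
  obtain ⟨j, hj⟩ := hends y hy
  obtain ⟨T', hT', hopen', hcross⟩ := hT.exists_crossing hconn hopen X
    ⟨i, by rcases hi with h | h <;> simp [h, hxX]⟩ ⟨j, by rcases hj with h | h <;> simp [h, hyX]⟩
  exact ⟨T', fun i => ⟨hT'.isTrail i, hopen' i⟩, fun e he => hT'.existsUnique_mem_edges he, hcross⟩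

/-- Let `G` be a connected bipartite graph with parts `X` and `Xᶜ` that has at least one
odd-degree vertex in `X` and at least one odd-degree vertex in `Xᶜ`, and let `V_odd` be
the set of odd-degree vertices of `G`. Then the edge set of `G` decomposes into exactly
`|V_odd| / 2` open trails, at least one of which is an `XY`-trail, i.e. an open trail
with one endpoint in `X` and the other endpoint in `Xᶜ`. -/
theorem connected_bipartite_decomposes_with_XY_trail
    {V : Type*} [Fintype V] (G : SimpleGraph V) [DecidableRel G.Adj]
    (X : Set V)
    (hbip : ∀ ⦃v w : V⦄, G.Adj v w → (v ∈ X ↔ w ∉ X))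
    (hconn : G.Connected)
    (hoX : ∃ v ∈ X, Odd (G.degree v))
    (hoY : ∃ v, v ∉ X ∧ Odd (G.degree v)) :
    ∃ trails : Fin ((Finset.univ.filter fun v : V => Odd (G.degree v)).card / 2) →
        (u : V) × (v : V) × G.Walk u v,
      (∀ i, (trails i).2.2.IsTrail ∧ (trails i).1 ≠ (trails i).2.1) ∧
      (∀ e ∈ G.edgeSet, ∃! i, e ∈ (trails i).2.2.edges) ∧
      (∃ i, ((trails i).1 ∈ X ∧ (trails i).2.1 ∉ X) ∨
            ((trails i).1 ∉ X ∧ (trails i).2.1 ∈ X)) :=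
  connected_bipartite_decomposes_with_XY_trail_general G X hconn hoX hoY
end

section
/- Let G be a connected graph containing a vertex v that is incident to at least three edges that are not cut edges of G. Then there exist two edges e1, e2 incident to v such that the graph G − {e1, e2}, obtained by deleting e1 and e2, is connected. -/
/-! Let the three non-bridges at `v` be `va`, `vb`, `vc`. Deleting `va` leaves a connected graph
`H`; if `vb` or `vc` is not a bridge of `H`, deleting it as well keeps `H` connected. Otherwise
both are bridges of `H`, and since neither is a bridge of `G`, the edge `va` must join `v` to the
far side of each: `a` lies on the `b`-side of `vb` and on the `c`-side of `vc`. But the `b`-side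
of `vb` avoids `v`, hence survives the deletion of `vc` and is joined to `v` through `vb`, so it
lies on the `v`-side of `vc`. -/

open SimpleGraph

namespace SimpleGraph

variable {V : Type*} {G : SimpleGraph V}

lemma Reachable.deleteEdges_singleton_or {u w x y : V} (h : G.Reachable x y) :
    (G.deleteEdges {s(u, w)}).Reachable x y ∨ (G.deleteEdges {s(u, w)}).Reachable x u ∨
      (G.deleteEdges {s(u, w)}).Reachable x w := by
  obtain ⟨p⟩ := h
  induction p with
  | nil => exact Or.inl (Reachable.refl _)
  | @cons a b c hadj p ih =>
    by_cases he : s(a, b) = s(u, w)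
    · rcases Sym2.eq_iff.mp he with ⟨rfl, -⟩ | ⟨rfl, -⟩
      · exact Or.inr (Or.inl (Reachable.refl _))
      · exact Or.inr (Or.inr (Reachable.refl _))
    · have hadj' : (G.deleteEdges {s(u, w)}).Adj a b := (deleteEdges_adj ..).mpr ⟨hadj, he⟩
      exact ih.imp hadj'.reachable.trans (Or.imp hadj'.reachable.trans hadj'.reachable.trans)

lemma Reachable.deleteEdges_of_not_reachable {x y v c : V} (h : G.Reachable x y)
    (hv : ¬G.Reachable x v) : (G.deleteEdges {s(v, c)}).Reachable x y := by
  classical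
  obtain ⟨p⟩ := h
  exact reachable_deleteEdges_iff_exists_walk.mpr
    ⟨p, fun he ↦ hv ⟨p.takeUntil v (p.fst_mem_support_of_mem_edges he)⟩⟩

lemma deleteEdges_pair (e f : Sym2 V) :
    G.deleteEdges {e, f} = (G.deleteEdges {e}).deleteEdges {f} := by
  rw [deleteEdges_deleteEdges, Set.singleton_union]

lemma reachable_of_isBridge_deleteEdges {v a b : V} (hb : ¬G.IsBridge s(v, b))
    (hb' : (G.deleteEdges {s(v, a)}).IsBridge s(v, b)) :
    ((G.deleteEdges {s(v, a)}).deleteEdges {s(v, b)}).Reachable b a := by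
  have hvb : (G.deleteEdges {s(v, b)}).Reachable b v := (not_not.mp (isBridge_iff.not.mp hb)).symm
  have hbv : ¬((G.deleteEdges {s(v, a)}).deleteEdges {s(v, b)}).Reachable b v :=
    fun h ↦ isBridge_iff.mp hb' h.symm
  rw [← deleteEdges_pair, Set.pair_comm, deleteEdges_pair] at hbv ⊢
  rcases hvb.deleteEdges_singleton_or (u := v) (w := a) with h | h | h
  exacts [absurd h hbv, absurd h hbv, h]

lemma IsBridge.reachable_deleteEdges_of_reachable {v a b c : V} (hb : G.IsBridge s(v, b))
    (hadj : G.Adj v b) (hbc : b ≠ c) (hab : (G.deleteEdges {s(v, b)}).Reachable b a) :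
    (G.deleteEdges {s(v, c)}).Reachable a v := by
  have hav : ¬(G.deleteEdges {s(v, b)}).Reachable a v :=
    fun h ↦ isBridge_iff.mp hb (hab.trans h).symm
  have hab' : ((G.deleteEdges {s(v, b)}).deleteEdges {s(v, c)}).Reachable a b :=
    hab.symm.deleteEdges_of_not_reachable hav
  have hbv : (G.deleteEdges {s(v, c)}).Adj b v :=
    (deleteEdges_adj ..).mpr ⟨hadj.symm, by simp [Sym2.eq_swap, hbc, hadj.ne']⟩
  rw [← deleteEdges_pair, Set.pair_comm, deleteEdges_pair] at hab'
  exact (hab'.mono (deleteEdges_le _)).trans hbv.reachable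

end SimpleGraph

theorem exists_two_edges_delete_connected_general
    {V : Type*} (G : SimpleGraph V)
    (hconn : G.Connected) (v : V)
    (h : ∃ e₁ e₂ e₃ : Sym2 V, e₁ ≠ e₂ ∧ e₁ ≠ e₃ ∧ e₂ ≠ e₃ ∧
      e₁ ∈ G.incidenceSet v ∧ e₂ ∈ G.incidenceSet v ∧ e₃ ∈ G.incidenceSet v ∧
      ¬ G.IsBridge e₁ ∧ ¬ G.IsBridge e₂ ∧ ¬ G.IsBridge e₃) :
    ∃ e₁ e₂ : Sym2 V, e₁ ≠ e₂ ∧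
      e₁ ∈ G.incidenceSet v ∧ e₂ ∈ G.incidenceSet v ∧
      (G.deleteEdges {e₁, e₂}).Connected := by
  obtain ⟨e₁, e₂, e₃, h12, h13, h23, hi1, hi2, hi3, hb1, hb2, hb3⟩ := h
  obtain ⟨a, rfl⟩ := Sym2.mem_iff_exists.mp hi1.2
  obtain ⟨b, rfl⟩ := Sym2.mem_iff_exists.mp hi2.2
  obtain ⟨c, rfl⟩ := Sym2.mem_iff_exists.mp hi3.2
  set H := G.deleteEdges {s(v, a)}
  have hH : H.Connected := hconn.connected_delete_edge_of_not_isBridge hb1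
  by_cases hHb : H.IsBridge s(v, b)
  · by_cases hHc : H.IsBridge s(v, c)
    · have hadj : H.Adj v b :=
        (deleteEdges_adj ..).mpr ⟨(mk'_mem_incidenceSet_left_iff G).mp hi2, h12.symm⟩
      have hbc : b ≠ c := fun hbc ↦ h23 (hbc ▸ rfl)
      have hav : (H.deleteEdges {s(v, c)}).Reachable a v := hHb.reachable_deleteEdges_of_reachable
        hadj hbc (reachable_of_isBridge_deleteEdges hb2 hHb)
      exact absurd ((reachable_of_isBridge_deleteEdges hb3 hHc).trans hav).symm
        (isBridge_iff.mp hHc)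
    · exact ⟨s(v, a), s(v, c), h13, hi1, hi3,
        by rw [deleteEdges_pair]; exact hH.connected_delete_edge_of_not_isBridge hHc⟩
  · exact ⟨s(v, a), s(v, b), h12, hi1, hi2,
      by rw [deleteEdges_pair]; exact hH.connected_delete_edge_of_not_isBridge hHb⟩

/-- Let `G` be a connected graph containing a vertex `v` incident to at least three
edges that are not cut edges (bridges) of `G`. Then there exist two edges `e₁, e₂`
incident to `v` such that the graph obtained from `G` by deleting `e₁` and `e₂` is
connected. -/
theorem exists_two_edges_delete_connected
    {V : Type*} [Fintype V] (G : SimpleGraph V)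
    (hconn : G.Connected) (v : V)
    (h : ∃ e₁ e₂ e₃ : Sym2 V, e₁ ≠ e₂ ∧ e₁ ≠ e₃ ∧ e₂ ≠ e₃ ∧
      e₁ ∈ G.incidenceSet v ∧ e₂ ∈ G.incidenceSet v ∧ e₃ ∈ G.incidenceSet v ∧
      ¬ G.IsBridge e₁ ∧ ¬ G.IsBridge e₂ ∧ ¬ G.IsBridge e₃) :
    ∃ e₁ e₂ : Sym2 V, e₁ ≠ e₂ ∧
      e₁ ∈ G.incidenceSet v ∧ e₂ ∈ G.incidenceSet v ∧
      (G.deleteEdges {e₁, e₂}).Connected :=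
  exists_two_edges_delete_connected_general G hconn v h
end

section
/- Let p be a nonnegative integer divisible by 3 and let k be an odd positive integer. Then the 2k-element set J = {p+3i−2, p+3i−1 : i ∈ [1,k]} can be partitioned into k pairs such that the multiset of pair sums is exactly the set {2p + 3(k−1)/2 + 3i : i ∈ [1,k]} of k consecutive multiples of 3. -/
/-!
Write `k = 2m + 1` and `J = {p + 3j + 1, p + 3j + 2 : j < k}`. The positions `σ t`, `τ t` of `t`
in the lists `0, 2, …, 2m, 1, 3, …, 2m - 1` and `1, 3, …, 2m - 1, 0, 2, …, 2m` are two
permutations of `[0, 2m]` with `σ t + τ t = t + m`. Pairing `p + 3 σ t + 1` with `p + 3 τ t + 2`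
therefore uses every element of `J` once and has pair sum `2p + 3m + 3(t + 1)`.
-/

open Function Set

def rankEvensFirst (m : ℕ) (t : Fin (2 * m + 1)) : Fin (2 * m + 1) :=
  ⟨if t.val % 2 = 0 then t / 2 else m + (t + 1) / 2, by split <;> omega⟩

def rankOddsFirst (m : ℕ) (t : Fin (2 * m + 1)) : Fin (2 * m + 1) :=
  ⟨if t.val % 2 = 0 then m + t / 2 else t / 2, by split <;> omega⟩

theorem rankEvensFirst_add_rankOddsFirst (m : ℕ) (t : Fin (2 * m + 1)) :
    (rankEvensFirst m t : ℕ) + rankOddsFirst m t = t + m := by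
  simp only [rankEvensFirst, rankOddsFirst]
  split <;> omega

theorem rankEvensFirst_bijective (m : ℕ) : Bijective (rankEvensFirst m) := by
  refine Finite.injective_iff_bijective.mp fun s t h => ?_
  simp only [rankEvensFirst, Fin.ext_iff] at h
  split_ifs at h <;> omega

theorem rankOddsFirst_bijective (m : ℕ) : Bijective (rankOddsFirst m) := by
  refine Finite.injective_iff_bijective.mp fun s t h => ?_
  simp only [rankOddsFirst, Fin.ext_iff] at h
  split_ifs at h <;> omega

theorem coe_biUnion_Icc_eq_range_union_range (p k : ℕ) :
    (↑((Finset.Icc 1 k).biUnion fun i => {p + 3 * i - 2, p + 3 * i - 1}) : Set ℕ) =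
      range (fun j : Fin k => p + 3 * j + 1) ∪ range (fun j : Fin k => p + 3 * j + 2) := by
  ext n
  simp only [Finset.coe_biUnion, Finset.coe_insert, Finset.coe_singleton, Finset.mem_coe,
    Finset.mem_Icc, mem_iUnion, mem_insert_iff, mem_singleton_iff, mem_union, mem_range,
    exists_prop]
  constructor
  · rintro ⟨i, ⟨hi1, hik⟩, rfl | rfl⟩
    · exact Or.inl ⟨⟨i - 1, by omega⟩, by simp only; omega⟩
    · exact Or.inr ⟨⟨i - 1, by omega⟩, by simp only; omega⟩
  · rintro (⟨j, rfl⟩ | ⟨j, rfl⟩)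
    · exact ⟨j + 1, ⟨by omega, j.isLt⟩, Or.inl (by omega)⟩
    · exact ⟨j + 1, ⟨by omega, j.isLt⟩, Or.inr (by omega)⟩

theorem pairing_J_odd_general (p k : ℕ) (hk : Odd k) :
    ∃ a b : Fin k → ℕ,
      Function.Injective (Sum.elim a b) ∧
      Set.range (Sum.elim a b) =
        ↑((Finset.Icc 1 k).biUnion fun i => {p + 3 * i - 2, p + 3 * i - 1}) ∧
      ∀ i : Fin k, a i + b i = 2 * p + 3 * ((k - 1) / 2) + 3 * (i.val + 1) := by
  obtain ⟨m, rfl⟩ := hk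
  have hσ := rankEvensFirst_bijective m
  have hτ := rankOddsFirst_bijective m
  refine ⟨fun t => p + 3 * rankEvensFirst m t + 1, fun t => p + 3 * rankOddsFirst m t + 2,
    ?_, ?_, fun t => ?_⟩
  · refine Injective.sumElim (fun s t h => hσ.1 ?_) (fun s t h => hτ.1 ?_) fun s t => ?_
    · simpa [Fin.ext_iff] using h
    · simpa [Fin.ext_iff] using h
    · omega
  · rw [Sum.elim_range, coe_biUnion_Icc_eq_range_union_range,
      ← hσ.2.range_comp fun j => p + 3 * (j : ℕ) + 1,
      ← hτ.2.range_comp fun j => p + 3 * (j : ℕ) + 2]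
    rfl
  · have := rankEvensFirst_add_rankOddsFirst m t
    simp only
    omega

/-- Let `p` be a nonnegative multiple of 3 and `k` an odd positive integer. The
`2k`-element set `J = {p+3i−2, p+3i−1 : i ∈ [1,k]}` can be partitioned into `k` pairs
`{a i, b i}` whose pair sums are exactly the `k` consecutive multiples of 3 in
`{2p + 3(k−1)/2 + 3i : i ∈ [1,k]}`. -/
theorem pairing_J_odd (p k : ℕ) (hp : 3 ∣ p) (hk : Odd k) (hk0 : 0 < k) :
    ∃ a b : Fin k → ℕ,
      Function.Injective (Sum.elim a b) ∧
      Set.range (Sum.elim a b) =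
        ↑((Finset.Icc 1 k).biUnion fun i => {p + 3 * i - 2, p + 3 * i - 1}) ∧
      ∀ i : Fin k, a i + b i = 2 * p + 3 * ((k - 1) / 2) + 3 * (i.val + 1) :=
  pairing_J_odd_general p k hk
end

section
/- Let p be a nonnegative integer divisible by 3 and let k be an odd positive integer. Then the 2k-element set J' = {p+3i−1, p+3i+1 : i ∈ [1,k]} can be partitioned into k pairs such that the multiset of pair sums is exactly the set {2p + 3(k+1)/2 + 3i : i ∈ [1,k]} of k consecutive multiples of 3. -/
/-!
Write `k = 2n + 1` and list `J'` as the lower elements `p + 3t + 2` and the upper elements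
`p + 3t + 4`, `t ∈ [0, 2n]`. A lower and an upper element with indices `s, t` sum to
`2p + 6 + 3(s + t)`, and the `i`-th prescribed sum is `2p + 6 + 3(n + i)`, so it suffices
to find permutations `α, β` of `[0, 2n]` with `α i + β i = n + i`. Halving does it:
`α (2m) = m, β (2m) = n + m` and `α (2m + 1) = n + 1 + m, β (2m + 1) = m`.
-/

open Function

theorem exists_injective_add_eq_add (n : ℕ) :
    ∃ α β : Fin (2 * n + 1) → Fin (2 * n + 1), Injective α ∧ Injective β ∧
      ∀ i, (α i : ℕ) + β i = n + i := by
  refine ⟨fun i => ⟨i / 2 + if i.val % 2 = 0 then 0 else n + 1, by split_ifs <;> omega⟩,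
    fun i => ⟨i / 2 + if i.val % 2 = 0 then n else 0, by split_ifs <;> omega⟩, ?_, ?_, ?_⟩
  · intro i j h
    simp only [Fin.mk.injEq] at h
    split_ifs at h <;> omega
  · intro i j h
    simp only [Fin.mk.injEq] at h
    split_ifs at h <;> omega
  · intro i
    dsimp only
    split_ifs <;> omega

section

variable (p k : ℕ)

theorem injective_sumElim_lower_upper :
    Injective (Sum.elim (fun t : Fin k => p + 3 * t + 2) (fun t : Fin k => p + 3 * t + 4)) := by
  rintro (s | s) (t | t) h <;> simp only [Sum.elim_inl, Sum.elim_inr] at h <;> congr 1 <;> omega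

theorem range_sumElim_lower_upper :
    Set.range (Sum.elim (fun t : Fin k => p + 3 * t + 2) (fun t : Fin k => p + 3 * t + 4)) =
      ↑((Finset.Icc 1 k).biUnion fun i => {p + 3 * i - 1, p + 3 * i + 1}) := by
  ext x
  simp only [Set.mem_range, Sum.exists, Sum.elim_inl, Sum.elim_inr, Finset.coe_biUnion,
    Finset.coe_Icc, Set.mem_iUnion, Set.mem_Icc, Finset.coe_insert, Finset.coe_singleton,
    Set.mem_insert_iff, Set.mem_singleton_iff, exists_prop]
  constructor
  · rintro (⟨t, rfl⟩ | ⟨t, rfl⟩)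
    · exact ⟨t + 1, ⟨by omega, t.isLt⟩, Or.inl (by omega)⟩
    · exact ⟨t + 1, ⟨by omega, t.isLt⟩, Or.inr (by omega)⟩
  · rintro ⟨i, ⟨hi1, hik⟩, rfl | rfl⟩
    · exact Or.inl ⟨⟨i - 1, by omega⟩, by dsimp only; omega⟩
    · exact Or.inr ⟨⟨i - 1, by omega⟩, by dsimp only; omega⟩

end

theorem pairing_J'_odd_general (p k : ℕ) (hk : Odd k) :
    ∃ a b : Fin k → ℕ,
      Function.Injective (Sum.elim a b) ∧
      Set.range (Sum.elim a b) =
        ↑((Finset.Icc 1 k).biUnion fun i => {p + 3 * i - 1, p + 3 * i + 1}) ∧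
      ∀ i : Fin k, a i + b i = 2 * p + 3 * ((k + 1) / 2) + 3 * (i.val + 1) := by
  obtain ⟨n, rfl⟩ := hk
  obtain ⟨α, β, hα, hβ, hsum⟩ := exists_injective_add_eq_add n
  set lower := fun t : Fin (2 * n + 1) => p + 3 * t + 2
  set upper := fun t : Fin (2 * n + 1) => p + 3 * t + 4
  have hmap : Sum.elim (lower ∘ α) (upper ∘ β) = Sum.elim lower upper ∘ Sum.map α β :=
    (Sum.elim_comp_map ..).symm
  refine ⟨lower ∘ α, upper ∘ β, ?_, ?_, fun i => ?_⟩
  · rw [hmap]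
    exact (injective_sumElim_lower_upper p _).comp (Sum.map_injective.2 ⟨hα, hβ⟩)
  · have hsurj : Surjective (Sum.map α β) :=
      Sum.map_surjective.2 ⟨Finite.surjective_of_injective hα, Finite.surjective_of_injective hβ⟩
    rw [hmap, Set.range_comp, hsurj.range_eq, Set.image_univ, range_sumElim_lower_upper]
  · have := hsum i
    simp only [lower, upper, comp_apply]
    omega

/-- Let `p` be a nonnegative multiple of 3 and `k` an odd positive integer. The
`2k`-element set `J' = {p+3i−1, p+3i+1 : i ∈ [1,k]}` can be partitioned into `k` pairs
`{a i, b i}` whose pair sums are exactly the `k` consecutive multiples of 3 in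
`{2p + 3(k+1)/2 + 3i : i ∈ [1,k]}`. -/
theorem pairing_J'_odd (p k : ℕ) (hp : 3 ∣ p) (hk : Odd k) (hk0 : 0 < k) :
    ∃ a b : Fin k → ℕ,
      Function.Injective (Sum.elim a b) ∧
      Set.range (Sum.elim a b) =
        ↑((Finset.Icc 1 k).biUnion fun i => {p + 3 * i - 1, p + 3 * i + 1}) ∧
      ∀ i : Fin k, a i + b i = 2 * p + 3 * ((k + 1) / 2) + 3 * (i.val + 1) :=
  pairing_J'_odd_general p k hk
end

section
/- Let p be a nonnegative integer divisible by 3 and let k be a positive even integer. Then the 2k-element set J = {p+3i−2, p+3i−1 : i ∈ [1,k]} can be partitioned into k pairs such that the multiset of pair sums is exactly {2p + 3(k/2+1) + 3i : i ∈ [1,k−1]} ∪ {2p+3}, i.e., k−1 consecutive multiples of 3 together with the multiple of 3 equal to 2p+3. -/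
/-!
Write the elements of `J` as `p + 3c + 1` and `p + 3c + 2` with `c < k`. A pairing that takes
`p + 3σ(j) + 1` and `p + 3τ(j) + 2` into the `j`-th pair, for two permutations `σ, τ` of
`[0, k)`, has pair sums `2p + 3 + 3(σ(j) + τ(j))`. For `k = 2m` take `σ(0) = τ(0) = 0`,
`(σ, τ)(2t - 1) = (t, m + t - 1)` and `(σ, τ)(2t) = (m + t, t)`, so that
`σ(j) + τ(j) = m + j` for `j ≠ 0`.
-/

open Set

/-- The permutation `σ` of `[0, k)` of the header. -/
def lowIndex (k j : ℕ) : ℕ :=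
  if j = 0 then 0 else if j % 2 = 1 then (j + 1) / 2 else k / 2 + j / 2

/-- The permutation `τ` of `[0, k)` of the header. -/
def highIndex (k j : ℕ) : ℕ :=
  if j = 0 then 0 else if j % 2 = 1 then (j + 1) / 2 + k / 2 - 1 else j / 2

theorem lowIndex_bijOn {k : ℕ} (hk : Even k) : BijOn (lowIndex k) (Iio k) (Iio k) := by
  have hk2 := Nat.even_iff.mp hk
  have hmaps : MapsTo (lowIndex k) (Iio k) (Iio k) := by
    intro j (hj : j < k)
    show lowIndex k j < k
    unfold lowIndex; split_ifs <;> omega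
  refine ((finite_Iio k).injOn_iff_bijOn_of_mapsTo hmaps).mp ?_
  intro i (hi : i < k) j (hj : j < k) hij
  unfold lowIndex at hij; split_ifs at hij <;> omega

theorem highIndex_bijOn {k : ℕ} (hk : Even k) : BijOn (highIndex k) (Iio k) (Iio k) := by
  have hk2 := Nat.even_iff.mp hk
  have hmaps : MapsTo (highIndex k) (Iio k) (Iio k) := by
    intro j (hj : j < k)
    show highIndex k j < k
    unfold highIndex; split_ifs <;> omega
  refine ((finite_Iio k).injOn_iff_bijOn_of_mapsTo hmaps).mp ?_
  intro i (hi : i < k) j (hj : j < k) hij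
  unfold highIndex at hij; split_ifs at hij <;> omega

theorem lowIndex_add_highIndex (k : ℕ) {j : ℕ} (hj : j ≠ 0) :
    lowIndex k j + highIndex k j = k / 2 + j := by
  unfold lowIndex highIndex; split_ifs <;> omega

section PairingByIndices

variable {k p : ℕ} {σ τ : ℕ → ℕ}

theorem injective_sumElim_of_injOn (hσ : InjOn σ (Iio k)) (hτ : InjOn τ (Iio k)) :
    Function.Injective
      (Sum.elim (fun j : Fin k => p + 3 * σ j + 1) (fun j : Fin k => p + 3 * τ j + 2)) := by
  rintro (i | i) (j | j) hij <;> simp only [Sum.elim_inl, Sum.elim_inr] at hij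
  · exact congrArg Sum.inl (Fin.ext (hσ i.isLt j.isLt (by omega)))
  · omega
  · omega
  · exact congrArg Sum.inr (Fin.ext (hτ i.isLt j.isLt (by omega)))

theorem range_sumElim_of_image_eq (hσ : σ '' Iio k = Iio k) (hτ : τ '' Iio k = Iio k) :
    range (Sum.elim (fun j : Fin k => p + 3 * σ j + 1) (fun j : Fin k => p + 3 * τ j + 2)) =
      ↑((Finset.Icc 1 k).biUnion fun i => {p + 3 * i - 2, p + 3 * i - 1}) := by
  have hσlt (j : Fin k) : σ j < k := hσ.subset (mem_image_of_mem σ j.isLt)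
  have hτlt (j : Fin k) : τ j < k := hτ.subset (mem_image_of_mem τ j.isLt)
  ext x
  simp only [mem_range, Finset.coe_biUnion, Finset.mem_coe, Finset.mem_Icc, mem_iUnion,
    Finset.coe_insert, mem_insert_iff, Finset.coe_singleton, mem_singleton_iff]
  constructor
  · rintro ⟨j | j, rfl⟩
    · exact ⟨σ j + 1, by have := hσlt j; omega, Or.inl (by simp only [Sum.elim_inl]; omega)⟩
    · exact ⟨τ j + 1, by have := hτlt j; omega, Or.inr (by simp only [Sum.elim_inr]; omega)⟩
  · rintro ⟨i, ⟨hi1, hik⟩, rfl | rfl⟩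
    · obtain ⟨j, hj, hσj⟩ := hσ.symm.subset (show i - 1 < k by omega)
      exact ⟨Sum.inl ⟨j, hj⟩, by simp only [Sum.elim_inl]; omega⟩
    · obtain ⟨j, hj, hτj⟩ := hτ.symm.subset (show i - 1 < k by omega)
      exact ⟨Sum.inr ⟨j, hj⟩, by simp only [Sum.elim_inr]; omega⟩

end PairingByIndices

theorem pairing_J_even_general (p k : ℕ) (hk : Even k) (hk0 : 0 < k) :
    ∃ a b : Fin k → ℕ,
      Function.Injective (Sum.elim a b) ∧
      Set.range (Sum.elim a b) =
        ↑((Finset.Icc 1 k).biUnion fun i => {p + 3 * i - 2, p + 3 * i - 1}) ∧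
      a ⟨0, hk0⟩ + b ⟨0, hk0⟩ = 2 * p + 3 ∧
      ∀ i : Fin k, i.val ≠ 0 → a i + b i = 2 * p + 3 * (k / 2 + 1) + 3 * i.val := by
  refine ⟨fun j => p + 3 * lowIndex k j + 1, fun j => p + 3 * highIndex k j + 2,
    injective_sumElim_of_injOn (lowIndex_bijOn hk).injOn (highIndex_bijOn hk).injOn,
    range_sumElim_of_image_eq (lowIndex_bijOn hk).image_eq (highIndex_bijOn hk).image_eq,
    by simp only [lowIndex, highIndex, if_pos]; omega, fun i hi => ?_⟩
  have := lowIndex_add_highIndex k hi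
  dsimp only
  omega

/-- Let `p` be a nonnegative multiple of 3 and `k` a positive even integer. The
`2k`-element set `J = {p+3i−2, p+3i−1 : i ∈ [1,k]}` can be partitioned into `k` pairs
`{a i, b i}` whose pair sums are exactly the `k−1` consecutive multiples of 3 in
`{2p + 3(k/2+1) + 3i : i ∈ [1,k−1]}` together with the multiple of 3 equal to `2p+3`. -/
theorem pairing_J_even (p k : ℕ) (hp : 3 ∣ p) (hk : Even k) (hk0 : 0 < k) :
    ∃ a b : Fin k → ℕ,
      Function.Injective (Sum.elim a b) ∧
      Set.range (Sum.elim a b) =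
        ↑((Finset.Icc 1 k).biUnion fun i => {p + 3 * i - 2, p + 3 * i - 1}) ∧
      a ⟨0, hk0⟩ + b ⟨0, hk0⟩ = 2 * p + 3 ∧
      ∀ i : Fin k, i.val ≠ 0 → a i + b i = 2 * p + 3 * (k / 2 + 1) + 3 * i.val :=
  pairing_J_even_general p k hk hk0
end

section
/- Let G = (A ∪ B, E) be a bipartite graph with minimum degree at least 15, let X ∪ Y be a partition of A ∪ B such that Y is an independent set of G and the bipartite subgraph G[X,Y] contains a matching M saturating X, let Z ⊆ Y be the set of vertices of Y not saturated by M, let Y_even be the set of vertices of Y of even degree in G, and let I1 be the set of isolated vertices of the induced subgraph G[X]. Then there exist disjoint edge sets E1 and E2 in G[X,Y] − M such that |E1| = |Z| and E1 covers every vertex of Z exactly once, |E2| = |Y_even| and E2 covers every vertex of Y_even exactly once, and every vertex of I1 has positive degree in the graph G[X,Y] − (M ∪ E1 ∪ E2). -/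
/-!
Each vertex `v` of `Z`, `Y_even` and `I1` keeps at least `15 - 1 = 14` edges once the matching
edge at `v` is removed, while an edge meets each of these three independent sets in at most one
vertex. Double counting thus gives Hall's condition for choosing a private non-matching edge at
every vertex of each of the three sets, with different edges for different sets; `E1` and `E2`
are the edges chosen for `Z` and for `Y_even`, and the edge chosen for a vertex of `I1` survives.
-/

open Finset Function

theorem Finset.exists_injective_of_le_card_of_card_filter_mem_le {ι α : Type*} [Fintype ι]
    [DecidableEq α] (t : ι → Finset α) {d : ℕ} (hd : 0 < d) (ht : ∀ i, d ≤ #(t i))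
    (hmult : ∀ a, #{i | a ∈ t i} ≤ d) :
    ∃ f : ι → α, Injective f ∧ ∀ i, f i ∈ t i := by
  refine (all_card_le_biUnion_card_iff_exists_injective t).1 fun s => ?_
  have hcount : #s * d ≤ #(s.biUnion t) * d := by
    refine card_mul_le_card_mul (fun i a => a ∈ t i) (fun i hi => ?_) (fun a _ => ?_)
    · rw [bipartiteAbove, filter_mem_eq_inter, inter_eq_right.2 (subset_biUnion_of_mem t hi)]
      exact ht i
    · exact (card_le_card (filter_subset_filter _ (subset_univ s))).trans (hmult a)
  exact Nat.le_of_mul_le_mul_right hcount hd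

namespace SimpleGraph

variable {V : Type*} {G : SimpleGraph V}

theorem IsIndepSet.eq_of_mem_edge {s : Set V} (hs : G.IsIndepSet s) {e : Sym2 V}
    (he : e ∈ G.edgeSet) {v w : V} (hve : v ∈ e) (hwe : w ∈ e) (hv : v ∈ s) (hw : w ∈ s) :
    v = w := by
  by_contra hne
  rw [(Sym2.mem_and_mem_iff hne).1 ⟨hve, hwe⟩, mem_edgeSet] at he
  exact hs hv hw hne he

theorem exists_adj_eq_mk_of_mem_edgeSet {e : Sym2 V} (he : e ∈ G.edgeSet) {v : V} (hv : v ∈ e) :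
    ∃ w, G.Adj v w ∧ e = s(v, w) := by
  obtain ⟨w, rfl⟩ := Sym2.mem_iff_exists.1 hv
  exact ⟨w, he, rfl⟩

variable [Fintype V] [DecidableEq V] [DecidableRel G.Adj]

theorem degree_sub_one_le_card_incidenceFinset_sdiff {M : Finset (Sym2 V)} {v : V}
    (hM : ∀ e ∈ M, ∀ e' ∈ M, v ∈ e → v ∈ e' → e = e') :
    G.degree v - 1 ≤ #(G.incidenceFinset v \ M) := by
  have hle : #(M ∩ G.incidenceFinset v) ≤ 1 := by
    refine card_le_one.2 fun e he e' he' => ?_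
    rw [mem_inter, mem_incidenceFinset] at he he'
    exact hM e he.1 e' he'.1 he.2.2 he'.2.2
  rw [card_sdiff, card_incidenceFinset_eq_degree]
  omega

theorem exists_disjoint_edges_covering_indepSets {k : ℕ} (S : Fin k → Finset V)
    (hS : ∀ j, G.IsIndepSet (S j)) (M : Finset (Sym2 V))
    (hM : ∀ v, ∀ e ∈ M, ∀ e' ∈ M, v ∈ e → v ∈ e' → e = e')
    (hdeg : ∀ v, k + 1 ≤ G.degree v) :
    ∃ E : Fin k → Finset (Sym2 V), Pairwise (Disjoint on E) ∧
      (∀ j, ∀ e ∈ E j, e ∈ G.edgeSet ∧ e ∉ M ∧ ∃ v ∈ S j, v ∈ e) ∧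
      (∀ j, #(E j) = #(S j)) ∧ (∀ j, ∀ v ∈ S j, #{e ∈ E j | v ∈ e} = 1) := by
  -- Indexing by `Σ j, S j` keeps the edges chosen for different classes apart where they overlap.
  let t : (Σ j, S j) → Finset (Sym2 V) := fun i => G.incidenceFinset i.2 \ M
  have ht : ∀ i e, e ∈ t i → e ∈ G.edgeSet ∧ e ∉ M ∧ i.2.1 ∈ e := fun i e he => by
    rw [mem_sdiff, mem_incidenceFinset] at he
    exact ⟨he.1.1, he.2, he.1.2⟩
  obtain ⟨f, hf_inj, hf⟩ : ∃ f : (Σ j, S j) → Sym2 V, Injective f ∧ ∀ i, f i ∈ t i := by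
    rcases k.eq_zero_or_pos with rfl | hk
    · exact ⟨fun i => i.1.elim0, fun i => i.1.elim0, fun i => i.1.elim0⟩
    refine exists_injective_of_le_card_of_card_filter_mem_le t hk
      (fun i => (Nat.le_sub_one_of_lt (hdeg _)).trans
        (degree_sub_one_le_card_incidenceFinset_sdiff (hM _))) fun e => ?_
    refine (card_le_card_of_injOn Sigma.fst (fun _ _ => mem_univ _) ?_).trans_eq
      (card_fin k)
    rintro ⟨j, v⟩ hv ⟨j', v'⟩ hv' (rfl : j = j')
    obtain ⟨he, -, hve⟩ := ht _ e (mem_filter.1 hv).2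
    have hv'e := (ht _ e (mem_filter.1 hv').2).2.2
    exact congrArg (Sigma.mk j) (Subtype.ext ((hS j).eq_of_mem_edge he hve hv'e v.2 v'.2))
  have hfj : ∀ j v, f ⟨j, v⟩ ∈ G.edgeSet ∧ f ⟨j, v⟩ ∉ M ∧ v.1 ∈ f ⟨j, v⟩ := fun j v =>
    ht _ _ (hf ⟨j, v⟩)
  refine ⟨fun j => (S j).attach.image fun v => f ⟨j, v⟩, ?_, ?_, ?_, ?_⟩
  · intro j j' hne
    dsimp only [onFun]
    simp only [Finset.disjoint_left, mem_image, mem_attach, true_and]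
    rintro _ ⟨v, rfl⟩ ⟨v', hv'⟩
    exact hne (congrArg Sigma.fst (hf_inj hv')).symm
  · simp only [mem_image, mem_attach, true_and]
    rintro j _ ⟨v, rfl⟩
    exact ⟨(hfj j v).1, (hfj j v).2.1, v, v.2, (hfj j v).2.2⟩
  · exact fun j => (card_image_of_injective _ (hf_inj.comp sigma_mk_injective)).trans card_attach
  · intro j v hv
    rw [card_eq_one]
    refine ⟨f ⟨j, ⟨v, hv⟩⟩, eq_singleton_iff_unique_mem.2 ⟨?_, ?_⟩⟩
    · exact mem_filter.2 ⟨mem_image_of_mem _ (mem_attach _ _), (hfj j _).2.2⟩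
    · simp only [mem_filter, mem_image, mem_attach, true_and]
      rintro _ ⟨⟨v', rfl⟩, hve⟩
      obtain ⟨he, -, hv'e⟩ := hfj j v'
      rw [show v' = ⟨v, hv⟩ from Subtype.ext ((hS j).eq_of_mem_edge he hv'e hve v'.2 hv)]

end SimpleGraph

theorem exists_E1_E2_covering_general
    {V : Type*} [Fintype V] [DecidableEq V]
    (G : SimpleGraph V) [DecidableRel G.Adj]
    (hdeg : ∀ v : V, 15 ≤ G.degree v)
    (X : Set V) [DecidablePred (· ∈ X)]
    (hYind : ∀ ⦃v w : V⦄, v ∉ X → w ∉ X → ¬ G.Adj v w)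
    (M : Finset (Sym2 V))
    (hMmatch : ∀ v : V, ∀ e ∈ M, ∀ e' ∈ M, v ∈ e → v ∈ e' → e = e') :
    ∃ E1 E2 : Finset (Sym2 V),
      Disjoint E1 E2 ∧
      (∀ e ∈ E1, e ∈ G.edgeFinset ∧ e ∉ M ∧ ∃ x y : V, e = s(x, y) ∧ x ∈ X ∧ y ∉ X) ∧
      (∀ e ∈ E2, e ∈ G.edgeFinset ∧ e ∉ M ∧ ∃ x y : V, e = s(x, y) ∧ x ∈ X ∧ y ∉ X) ∧
      E1.card = (Finset.univ.filter fun y : V => y ∉ X ∧ ∀ e ∈ M, y ∉ e).card ∧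
      (∀ z : V, z ∉ X → (∀ e ∈ M, z ∉ e) →
        (E1.filter fun e => z ∈ e).card = 1) ∧
      E2.card = (Finset.univ.filter fun y : V => y ∉ X ∧ Even (G.degree y)).card ∧
      (∀ y : V, y ∉ X → Even (G.degree y) →
        (E2.filter fun e => y ∈ e).card = 1) ∧
      (∀ x : V, x ∈ X → (∀ w ∈ X, ¬ G.Adj x w) →
        ∃ e ∈ G.edgeFinset, e ∉ M ∧ e ∉ E1 ∧ e ∉ E2 ∧ x ∈ e ∧
          ∃ x' y : V, e = s(x', y) ∧ x' ∈ X ∧ y ∉ X) := by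
  set Z : Finset V := univ.filter fun y => y ∉ X ∧ ∀ e ∈ M, y ∉ e
  set Yeven : Finset V := univ.filter fun y => y ∉ X ∧ Even (G.degree y)
  set I1 : Finset V := univ.filter fun x => x ∈ X ∧ ∀ w ∈ X, ¬ G.Adj x w
  have hY : ∀ s : Finset V, (∀ y ∈ s, y ∉ X) → G.IsIndepSet (s : Set V) :=
    fun s hs v hv w hw _ => hYind (hs v hv) (hs w hw)
  have hI1 : G.IsIndepSet (I1 : Set V) := fun v hv w hw _ => by
    simp only [I1, coe_filter, mem_univ, true_and, Set.mem_ofPred_eq] at hv hw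
    exact hv.2 w hw.1
  obtain ⟨E, hdisj, hE, hcard, hcover⟩ := G.exists_disjoint_edges_covering_indepSets ![Z, Yeven, I1]
    (fun j => by
      fin_cases j
      exacts [hY Z fun y hy => (mem_filter.1 hy).2.1, hY Yeven fun y hy => (mem_filter.1 hy).2.1,
        hI1])
    M hMmatch fun v => (by norm_num : 3 + 1 ≤ 15).trans (hdeg v)
  have hcross : ∀ j : Fin 2, ∀ e ∈ E j.castSucc,
      e ∈ G.edgeFinset ∧ e ∉ M ∧ ∃ x y : V, e = s(x, y) ∧ x ∈ X ∧ y ∉ X := by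
    intro j e he
    obtain ⟨heG, heM, y, hy, hye⟩ := hE _ e he
    have hyX : y ∉ X := by fin_cases j <;> exact (mem_filter.1 hy).2.1
    obtain ⟨x, hxy, rfl⟩ := G.exists_adj_eq_mk_of_mem_edgeSet heG hye
    exact ⟨G.mem_edgeFinset.2 heG, heM, x, y, Sym2.eq_swap,
      by_contra fun hxX => hYind hyX hxX hxy, hyX⟩
  refine ⟨E 0, E 1, hdisj (by decide), hcross 0, hcross 1,
    hcard 0, fun z hz hzM => hcover 0 z (mem_filter.2 ⟨mem_univ z, hz, hzM⟩),
    hcard 1, fun y hy hyd => hcover 1 y (mem_filter.2 ⟨mem_univ y, hy, hyd⟩), ?_⟩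
  intro x hx hxiso
  obtain ⟨e, hxe⟩ := card_eq_one.1 (hcover 2 x (mem_filter.2 ⟨mem_univ x, hx, hxiso⟩))
  obtain ⟨he2, hxe'⟩ := mem_filter.1 (hxe ▸ mem_singleton_self e)
  obtain ⟨heG, heM, -⟩ := hE 2 e he2
  obtain ⟨w, hxw, rfl⟩ := G.exists_adj_eq_mk_of_mem_edgeSet heG hxe'
  exact ⟨_, G.mem_edgeFinset.2 heG, heM, disjoint_right.1 (hdisj (by decide)) he2,
    disjoint_right.1 (hdisj (by decide)) he2, hxe', x, w, rfl, hx, fun hwX => hxiso w hwX hxw⟩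

/-- Let `G` be a bipartite graph with minimum degree at least 15, let `X ∪ Xᶜ` be a
partition of the vertices such that `Y = Xᶜ` is independent and there is a matching `M`
among the edges between `X` and `Y` saturating `X`. Let `Z ⊆ Y` be the set of vertices
of `Y` not saturated by `M`, `Y_even` the set of vertices of `Y` of even degree in `G`,
and `I1` the set of isolated vertices of the induced subgraph `G[X]`. Then there exist
disjoint edge sets `E1, E2` among the edges of `G[X,Y] − M` such that `|E1| = |Z|` and
`E1` covers each vertex of `Z` exactly once, `|E2| = |Y_even|` and `E2` covers each
vertex of `Y_even` exactly once, and every vertex of `I1` has positive degree in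
`G[X,Y] − (M ∪ E1 ∪ E2)`. -/
theorem exists_E1_E2_covering
    {V : Type*} [Fintype V] [DecidableEq V]
    (G : SimpleGraph V) [DecidableRel G.Adj]
    (hbip : G.Colorable 2)
    (hdeg : ∀ v : V, 15 ≤ G.degree v)
    (X : Set V) [DecidablePred (· ∈ X)]
    (hYind : ∀ ⦃v w : V⦄, v ∉ X → w ∉ X → ¬ G.Adj v w)
    (M : Finset (Sym2 V))
    (hME : M ⊆ G.edgeFinset)
    (hMcross : ∀ e ∈ M, ∃ x y : V, e = s(x, y) ∧ x ∈ X ∧ y ∉ X)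
    (hMmatch : ∀ v : V, ∀ e ∈ M, ∀ e' ∈ M, v ∈ e → v ∈ e' → e = e')
    (hMsat : ∀ x ∈ X, ∃ e ∈ M, x ∈ e) :
    ∃ E1 E2 : Finset (Sym2 V),
      Disjoint E1 E2 ∧
      (∀ e ∈ E1, e ∈ G.edgeFinset ∧ e ∉ M ∧ ∃ x y : V, e = s(x, y) ∧ x ∈ X ∧ y ∉ X) ∧
      (∀ e ∈ E2, e ∈ G.edgeFinset ∧ e ∉ M ∧ ∃ x y : V, e = s(x, y) ∧ x ∈ X ∧ y ∉ X) ∧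
      E1.card = (Finset.univ.filter fun y : V => y ∉ X ∧ ∀ e ∈ M, y ∉ e).card ∧
      (∀ z : V, z ∉ X → (∀ e ∈ M, z ∉ e) →
        (E1.filter fun e => z ∈ e).card = 1) ∧
      E2.card = (Finset.univ.filter fun y : V => y ∉ X ∧ Even (G.degree y)).card ∧
      (∀ y : V, y ∉ X → Even (G.degree y) →
        (E2.filter fun e => y ∈ e).card = 1) ∧
      (∀ x : V, x ∈ X → (∀ w ∈ X, ¬ G.Adj x w) →
        ∃ e ∈ G.edgeFinset, e ∉ M ∧ e ∉ E1 ∧ e ∉ E2 ∧ x ∈ e ∧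
          ∃ x' y : V, e = s(x', y) ∧ x' ∈ X ∧ y ∉ X) :=
  exists_E1_E2_covering_general G hdeg X hYind M hMmatch
end
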